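/- Let $h: \Sigma^* \to \Sigma^*$ be a strongly synchronizing $q$-uniform morphism with fixed point $h^\omega(0)$, and let $n > 1$ be an integer. If $h^\omega(0)$ contains no factor of the form $z^n$ with $|z^n| < 2nq$, then $h^\omega(0)$ contains no $n$-th power at all. -/

import Mathlib

/-- `u` occurs as a factor of the infinite word `w` (at some position `i`). -/
def FactorOf {α : Type*} (u : List α) (w : ℕ → α) : Prop :=
  ∃ i : ℕ, u = (List.range u.length).map (fun k => w (i + k))

/-- `h` is a synchronizing morphism. -/
def Synchronizing {α β : Type*} (h : α → List β) : Prop :=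
  ∀ (a b c : α) (r s : List β), h a ++ h b = r ++ h c ++ s →
    (r = [] ∧ a = c) ∨ (s = [] ∧ b = c)

/-- `h` is a strongly synchronizing morphism. -/
def StronglySynchronizing {α β : Type*} (h : α → List β) : Prop :=
  Synchronizing h ∧ ∀ (a b c : α) (x y : List β), h c = x ++ y →
    x <+: h a → y <:+ h b → c = a ∨ c = b

/-!
Suppose `zⁿ` occurs in `W` at position `i` with period `P = |z| ≥ 2q`. An image block `h (W t)`
lying in the occurrence at least `P` letters before its end reappears `P` letters later, so
synchronization forces `q ∣ P` and `W (t + P / q) = W t`. Hence the preimage of the occurrence,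
starting at block `a = i / q`, is `P / q`-periodic except possibly at its two ends. The block
`h (W (a + P / q))` splits as `x ++ y` with `x` a prefix of `h (W (a + n P / q))` and `y` a suffix
of `h (W a)`, so strong synchronization repairs one of the two ends. This gives an `n`-th power
of period `P / q < P`; descending, we reach one of period below `2q`.
-/

namespace InfiniteWord

variable {α : Type*}

def factorAt (W : ℕ → α) (s l : ℕ) : List α :=
  (List.range l).map fun k => W (s + k)

def PeriodicOn (W : ℕ → α) (p s l : ℕ) : Prop :=
  ∀ k, k + p < l → W (s + k) = W (s + k + p)

variable {W : ℕ → α}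

@[simp] lemma length_factorAt (s l : ℕ) : (factorAt W s l).length = l := by
  simp [factorAt]

lemma getElem?_factorAt {s l k : ℕ} (hk : k < l) : (factorAt W s l)[k]? = some (W (s + k)) := by
  simp [factorAt, hk]

lemma factorAt_add (s l r : ℕ) :
    factorAt W s (l + r) = factorAt W s l ++ factorAt W (s + l) r := by
  simp only [factorAt, List.range_add, List.map_append, List.map_map]
  congr 1
  exact List.map_congr_left fun k _ => by simp [Nat.add_assoc]

lemma factorAt_congr {s₁ s₂ l : ℕ} (hW : ∀ k < l, W (s₁ + k) = W (s₂ + k)) :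
    factorAt W s₁ l = factorAt W s₂ l :=
  List.map_congr_left fun k hk => hW k (List.mem_range.1 hk)

lemma getElem?_flatten_replicate (z : List α) {n k : ℕ} (hk : k < n * z.length) :
    (List.replicate n z).flatten[k]? = z[k % z.length]? := by
  induction n generalizing k with
  | zero => simp at hk
  | succ n ih =>
    rw [List.replicate_succ, List.flatten_cons]
    by_cases hkz : k < z.length
    · rw [List.getElem?_append_left hkz, Nat.mod_eq_of_lt hkz]
    · rw [List.getElem?_append_right (by omega), ih (by rw [Nat.succ_mul] at hk; omega),
        ← Nat.mod_eq_sub_mod (by omega)]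

namespace PeriodicOn

variable {p s l : ℕ}

lemma apply_mod (hW : PeriodicOn W p s l) {k : ℕ} (hk : k < l) : W (s + k % p) = W (s + k) := by
  rcases Nat.eq_zero_or_pos p with rfl | hp
  · rw [Nat.mod_zero]
  induction k using Nat.strong_induction_on with
  | _ k ih =>
    by_cases hkp : k < p
    · rw [Nat.mod_eq_of_lt hkp]
    · rw [Nat.mod_eq_sub_mod (by omega), ih (k - p) (by omega) (by omega),
        hW (k - p) (by omega), Nat.add_assoc, Nat.sub_add_cancel (by omega)]

lemma apply_add_mul (hW : PeriodicOn W p s l) {k j : ℕ} (hk : k + j * p < l) :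
    W (s + k + j * p) = W (s + k) := by
  rw [Nat.add_assoc, ← hW.apply_mod hk, ← hW.apply_mod (k := k) (by omega),
    Nat.add_mul_mod_self_right]

lemma extend_left (hW : PeriodicOn W p (s + 1) l) (h0 : W s = W (s + p)) :
    PeriodicOn W p s (l + 1) := by
  rintro (_ | k) hk
  · exact h0
  · simpa [Nat.add_assoc, Nat.add_comm 1] using hW k (by omega)

lemma extend_right (hW : PeriodicOn W p s (l + p)) (hl : W (s + l) = W (s + l + p)) :
    PeriodicOn W p s (l + p + 1) := by
  intro k hk
  rcases Nat.lt_or_ge k l with hkl | hkl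
  · exact hW k (by omega)
  · obtain rfl : k = l := by omega
    exact hl

end PeriodicOn

lemma factorOf_flatten_replicate {n p s : ℕ} (hW : PeriodicOn W p s (n * p)) :
    FactorOf (List.replicate n (factorAt W s p)).flatten W := by
  have hlen : (List.replicate n (factorAt W s p)).flatten.length = n * p := by simp
  refine ⟨s, List.ext_getElem? fun k => ?_⟩
  change _ = (factorAt W s _)[k]?
  rw [hlen]
  by_cases hk : k < n * p
  · have hp : 0 < p := Nat.pos_of_ne_zero fun h0 => by simp [h0] at hk
    rw [getElem?_flatten_replicate _ (by simpa using hk), length_factorAt,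
      getElem?_factorAt (Nat.mod_lt _ hp), getElem?_factorAt hk, hW.apply_mod hk]
  · rw [List.getElem?_eq_none (by omega), List.getElem?_eq_none (by simp; omega)]

lemma _root_.FactorOf.periodicOn {n : ℕ} {z : List α}
    (hz : FactorOf (List.replicate n z).flatten W) :
    ∃ s, PeriodicOn W z.length s (n * z.length) := by
  obtain ⟨s, hs⟩ := hz
  have hget : ∀ j < n * z.length, some (W (s + j)) = z[j % z.length]? := fun j hj => by
    rw [← getElem?_flatten_replicate z hj, hs]
    simp [hj]
  refine ⟨s, fun k hk => Option.some.inj ?_⟩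
  rw [hget k (by omega), Nat.add_assoc, hget (k + z.length) hk, Nat.add_mod_right]

section Morphism

variable {h : α → List α} {q : ℕ}

lemma apply_eq_factorAt (hq : 0 < q) (huni : ∀ a : α, (h a).length = q)
    (hfix : ∀ m : ℕ, (h (W (m / q)))[m % q]? = some (W m)) (t : ℕ) :
    h (W t) = factorAt W (q * t) q := by
  refine List.ext_getElem? fun k => ?_
  by_cases hk : k < q
  · have hdiv : (q * t + k) / q = t := by
      rw [Nat.mul_add_div hq, Nat.div_eq_of_lt hk, Nat.add_zero]
    have hmod : (q * t + k) % q = k := by rw [Nat.mul_add_mod, Nat.mod_eq_of_lt hk]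
    have := hfix (q * t + k)
    rwa [hdiv, hmod, ← getElem?_factorAt hk] at this
  · rw [List.getElem?_eq_none (by rw [huni]; omega), List.getElem?_eq_none (by simp; omega)]

lemma _root_.Synchronizing.dvd_and_eq_of_factorAt_eq (hs : Synchronizing h) (hq : 0 < q)
    (hblock : ∀ t, h (W t) = factorAt W (q * t) q) {m : ℕ} {c : α}
    (hm : factorAt W m q = h c) : q ∣ m ∧ W (m / q) = c := by
  set t := m / q
  set d := m % q
  have hd : d < q := Nat.mod_lt _ hq
  have htd : q * t + d = m := Nat.div_add_mod m q
  have hpair :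
      h (W t) ++ h (W (t + 1)) = factorAt W (q * t) d ++ h c ++ factorAt W (m + q) (q - d) := by
    rw [hblock, hblock, Nat.mul_succ,
      ← factorAt_add, ← hm, ← htd, ← factorAt_add, Nat.add_assoc, ← factorAt_add]
    congr 1
    omega
  rcases hs _ _ _ _ _ hpair with ⟨hr, hc⟩ | ⟨hs, -⟩
  · have hd0 : d = 0 := by simpa using congrArg List.length hr
    exact ⟨Nat.dvd_of_mod_eq_zero hd0, hc⟩
  · have := congrArg List.length hs
    simp at this
    omega

lemma _root_.StronglySynchronizing.eq_or_eq_of_blocks_agree (hs : StronglySynchronizing h)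
    (hblock : ∀ t, h (W t) = factorAt W (q * t) q) {b c u v : ℕ} (hb : b ≤ q)
    (hpre : ∀ k < b, W (q * c + k) = W (q * u + k))
    (hsuf : ∀ k, b ≤ k → k < q → W (q * c + k) = W (q * v + k)) :
    W c = W u ∨ W c = W v := by
  have hsplit (t : ℕ) : h (W t) = factorAt W (q * t) b ++ factorAt W (q * t + b) (q - b) := by
    rw [hblock, ← factorAt_add, Nat.add_sub_cancel' hb]
  refine hs.2 _ _ _ _ _ (hsplit c) ?_ ?_
  · rw [factorAt_congr hpre, hsplit u]
    exact List.prefix_append _ _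
  · have hsuf' : ∀ k < q - b, W (q * c + b + k) = W (q * v + b + k) := fun k hk => by
      simpa [Nat.add_assoc] using hsuf (b + k) (by omega) (by omega)
    rw [factorAt_congr hsuf', hsplit v]
    exact List.suffix_append _ _

lemma PeriodicOn.dvd_and_apply_add_div (hs : Synchronizing h) (hq : 0 < q)
    (hblock : ∀ t, h (W t) = factorAt W (q * t) q) {P i l t : ℕ}
    (hW : PeriodicOn W P i l) (hi : i ≤ q * t) (hl : q * t + q + P ≤ i + l) :
    q ∣ P ∧ W (t + P / q) = W t := by
  have hocc : factorAt W (q * t + P) q = h (W t) := by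
    rw [hblock]
    refine factorAt_congr fun k hk => ?_
    have := hW (q * t + k - i) (by omega)
    rw [show i + (q * t + k - i) = q * t + k by omega] at this
    rw [this, Nat.add_right_comm]
  obtain ⟨hdvd, heq⟩ := hs.dvd_and_eq_of_factorAt_eq hq hblock hocc
  rw [Nat.mul_add_div hq] at heq
  exact ⟨(Nat.dvd_add_right (Nat.dvd_mul_right q t)).1 hdvd, heq⟩

lemma PeriodicOn.periodicOn_preimage (hs : Synchronizing h) (hq : 0 < q)
    (hblock : ∀ t, h (W t) = factorAt W (q * t) q) {a b p n : ℕ} (hb : b < q)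
    (hW : PeriodicOn W (q * p) (q * a + b) (n * (q * p))) :
    PeriodicOn W p (a + 1) (n * p - 1) := by
  intro k hk
  have hle := Nat.mul_le_mul_left q (show k + p + 2 ≤ n * p by omega)
  have := (hW.dvd_and_apply_add_div hs hq hblock (t := a + 1 + k) (by nlinarith)
    (by nlinarith)).2
  rw [Nat.mul_div_cancel_left p hq] at this
  exact this.symm

lemma PeriodicOn.apply_add_eq_or_apply_add_eq (hs : StronglySynchronizing h)
    (hblock : ∀ t, h (W t) = factorAt W (q * t) q) {a b p n : ℕ} (hb : b < q)
    (hp : 0 < p) (hn : 2 ≤ n) (hW : PeriodicOn W (q * p) (q * a + b) (n * (q * p))) :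
    W (a + p) = W (a + n * p) ∨ W (a + p) = W a := by
  have hqa : q * (a + p) = q * a + q * p := by ring
  have hqan : q * (a + n * p) = q * a + n * (q * p) := by ring
  have hn1 : (n - 1) * (q * p) = n * (q * p) - q * p := Nat.sub_one_mul _ _
  have hn2 : 2 * (q * p) ≤ n * (q * p) := Nat.mul_le_mul_right _ hn
  have hqp : q ≤ q * p := Nat.le_mul_of_pos_right q hp
  refine hs.eq_or_eq_of_blocks_agree hblock hb.le (fun k hk => ?_) (fun k hbk hkq => ?_)
  · have := hW.apply_add_mul (k := q * p + k - b) (j := n - 1) (by omega)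
    rw [hqa, hqan]
    convert this.symm using 2 <;> omega
  · have := hW (k - b) (by omega)
    rw [hqa]
    convert this.symm using 2 <;> omega

lemma PeriodicOn.exists_periodicOn_div (hs : StronglySynchronizing h) (hq : 0 < q)
    (hblock : ∀ t, h (W t) = factorAt W (q * t) q) {n P i : ℕ} (hn : 2 ≤ n)
    (hP : 2 * q ≤ P) (hW : PeriodicOn W P i (n * P)) :
    ∃ s, PeriodicOn W (P / q) s (n * (P / q)) := by
  set a := i / q
  set b := i % q
  have hb : b < q := Nat.mod_lt _ hq
  have hab : q * a + b = i := Nat.div_add_mod i q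
  have h2P : 2 * P ≤ n * P := Nat.mul_le_mul_right _ hn
  obtain ⟨p, rfl⟩ : q ∣ P :=
    (hW.dvd_and_apply_add_div hs.1 hq hblock (t := a + 1) (by nlinarith) (by nlinarith)).1
  rw [Nat.mul_div_cancel_left p hq]
  rw [← hab] at hW
  have hp : 2 ≤ p := Nat.le_of_mul_le_mul_left (by linarith) hq
  have h2p : 2 * p ≤ n * p := Nat.mul_le_mul_right _ hn
  have hn2 : (n - 2) * p = n * p - 2 * p := Nat.sub_mul _ _ _
  have hpre := hW.periodicOn_preimage hs.1 hq hblock hb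
  rcases hW.apply_add_eq_or_apply_add_eq hs hblock hb (by omega) hn with hY | hY
  · have hmid := hpre.apply_add_mul (k := p - 1) (j := n - 2) (by omega)
    rw [show n * p - 1 = (n * p - 1 - p) + p by omega] at hpre
    refine ⟨a + 1, ?_⟩
    convert hpre.extend_right ?_ using 1
    · omega
    · rw [show a + 1 + (n * p - 1 - p) = a + 1 + (p - 1) + (n - 2) * p by omega, hmid,
        show a + 1 + (p - 1) = a + p by omega, hY]
      congr 1
      omega
  · exact ⟨a, by convert hpre.extend_left hY.symm using 1; omega⟩

lemma PeriodicOn.exists_periodicOn_lt (hs : StronglySynchronizing h) (hq : 2 ≤ q)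
    (hblock : ∀ t, h (W t) = factorAt W (q * t) q) {n : ℕ} (hn : 2 ≤ n) :
    ∀ {P i : ℕ}, 0 < P → PeriodicOn W P i (n * P) →
      ∃ p s, 0 < p ∧ p < 2 * q ∧ PeriodicOn W p s (n * p) := by
  intro P
  induction P using Nat.strong_induction_on with
  | _ P ih =>
    intro i hP hW
    by_cases hPq : P < 2 * q
    · exact ⟨P, i, hP, hPq, hW⟩
    obtain ⟨s, hs'⟩ := hW.exists_periodicOn_div hs (by omega) hblock hn (by omega)
    exact ih (P / q) (Nat.div_lt_self hP (by omega)) (Nat.div_pos (by omega) (by omega)) hs'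

end Morphism

end InfiniteWord

open InfiniteWord

/-- if the fixed point `W = h^ω(0)` of a strongly synchronizing `q`-uniform
morphism has no `n`-th power factor `zⁿ` with `|zⁿ| < 2nq`, then it has no `n`-th power
factor at all. -/
theorem no_small_powers_imp_power_free {α : Type*} (h : α → List α) (q : ℕ) (hq : 2 ≤ q)
    (huni : ∀ a : α, (h a).length = q) (hssm : StronglySynchronizing h)
    (W : ℕ → α)
    (hfix : ∀ m : ℕ, (h (W (m / q)))[m % q]? = some (W m))
    (n : ℕ) (hn : 1 < n)
    (hsmall : ∀ z : List α, z ≠ [] → n * z.length < 2 * n * q →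
      ¬ FactorOf ((List.replicate n z).flatten) W) :
    ∀ z : List α, z ≠ [] → ¬ FactorOf ((List.replicate n z).flatten) W := by
  intro z hz hfac
  have hblock := apply_eq_factorAt (by omega) huni hfix
  obtain ⟨i, hW⟩ := hfac.periodicOn
  obtain ⟨p, s, hp, hpq, hWp⟩ :=
    hW.exists_periodicOn_lt hssm hq hblock hn (List.length_pos_iff.2 hz)
  refine hsmall (factorAt W s p) ?_ ?_ (factorOf_flatten_replicate hWp)
  · simpa [← List.length_pos_iff] using hp
  · calc n * (factorAt W s p).length = n * p := by rw [length_factorAt]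
      _ < n * (2 * q) := Nat.mul_lt_mul_of_pos_left hpq (by omega)
      _ = 2 * n * q := by ring
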